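/- arXiv:1501.00605 — 7 statements merged into one kernel-verified Lean document; each statement's English description precedes it below -/
import Mathlib

section
/- Equality case of Kato's inequality (flat model): Let E be a real inner product space, n a natural number, V : EuclideanSpace ℝ (Fin n) → E differentiable at x with V x ≠ 0. Then the following are equivalent: (i) for every direction u, |fderiv ℝ (fun y => ‖V y‖) x u| = ‖(fderiv ℝ V x) u‖; (ii) there exists a linear functional ω : EuclideanSpace ℝ (Fin n) →ₗ[ℝ] ℝ such that (fderiv ℝ V x) u = (ω u) • (V x) for every u. In other words, Kato's inequality is an equality at x exactly when the derivative of V at x is of the form ω ⊗ V x for a real 1-form ω. -/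
/-!
The derivative of `‖V‖` at `x` in direction `u` is `⟪V x, V' u⟫ / ‖V x‖`, so equality in Kato's
inequality in direction `u` is the equality case of Cauchy–Schwarz: `V' u` lies on the line
`ℝ ∙ V x`. A linear map with values on the line through `V x ≠ 0` factors as `ω (·) • V x`
through the isomorphism `ℝ ≃ ℝ ∙ V x`, which makes `ω` linear.
-/

open scoped RealInnerProductSpace

theorem DifferentiableAt.fderiv_norm_apply {F G : Type*} [NormedAddCommGroup F]
    [InnerProductSpace ℝ F] [NormedAddCommGroup G] [NormedSpace ℝ G] {V : G → F} {x : G}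
    (hV : DifferentiableAt ℝ V x) (hx : V x ≠ 0) (u : G) :
    fderiv ℝ (fun y => ‖V y‖) x u = ⟪V x, fderiv ℝ V x u⟫ / ‖V x‖ := by
  -- differentiate `‖V‖ ^ 2` once as a square of `‖V‖` and once as `⟪V, V⟫`
  have hsq := congrArg (· u)
    (((hV.norm ℝ hx).hasFDerivAt.pow 2).unique hV.hasFDerivAt.norm_sq)
  simp only [Nat.add_one_sub_one, pow_one, nsmul_eq_mul, Nat.cast_ofNat,
    smul_apply, smul_eq_mul, ContinuousLinearMap.comp_apply,
    coe_innerSL_apply] at hsq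
  field_simp
  linarith

theorem abs_real_inner_eq_norm_mul_norm_iff {F : Type*} [NormedAddCommGroup F]
    [InnerProductSpace ℝ F] {v w : F} (hv : v ≠ 0) :
    |⟪v, w⟫| = ‖v‖ * ‖w‖ ↔ ∃ t : ℝ, w = t • v :=
  ((norm_inner_eq_norm_tfae ℝ v w).out 0 2).trans (or_iff_right hv)

theorem LinearMap.forall_exists_eq_smul_iff {R M N : Type*} [Ring R] [IsDomain R]
    [AddCommGroup M] [Module R M] [AddCommGroup N] [Module R N] [Module.IsTorsionFree R N]
    (L : M →ₗ[R] N) {v : N} (hv : v ≠ 0) :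
    (∀ u, ∃ t : R, L u = t • v) ↔ ∃ ω : M →ₗ[R] R, ∀ u, L u = ω u • v := by
  refine ⟨fun h => ?_, fun ⟨ω, hω⟩ u => ⟨ω u, hω u⟩⟩
  have hL : ∀ u, L u ∈ R ∙ v := fun u =>
    let ⟨t, ht⟩ := h u
    Submodule.mem_span_singleton.2 ⟨t, ht.symm⟩
  refine ⟨(LinearEquiv.toSpanNonzeroSingleton R N v hv).symm.toLinearMap ∘ₗ L.codRestrict _ hL,
    fun u => ?_⟩
  simp

/-- Equality case of Kato's inequality (flat model): for `V` differentiable at `x` with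
`V x ≠ 0`, equality `|∇‖V‖| = ‖∇V‖` holds in every direction iff the derivative of `V` at `x`
has the form `ω ⊗ V x` for a real 1-form `ω`. -/
theorem kato_equality_iff_flat {E : Type*} [NormedAddCommGroup E] [InnerProductSpace ℝ E]
    {n : ℕ} (V : EuclideanSpace ℝ (Fin n) → E) (x : EuclideanSpace ℝ (Fin n))
    (hV : DifferentiableAt ℝ V x) (hx : V x ≠ 0) :
    (∀ u : EuclideanSpace ℝ (Fin n),
        |fderiv ℝ (fun y => ‖V y‖) x u| = ‖(fderiv ℝ V x) u‖) ↔
      (∃ ω : EuclideanSpace ℝ (Fin n) →ₗ[ℝ] ℝ,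
        ∀ u : EuclideanSpace ℝ (Fin n), (fderiv ℝ V x) u = (ω u) • (V x)) := by
  have hVx : 0 < ‖V x‖ := norm_pos_iff.2 hx
  calc (∀ u, |fderiv ℝ (fun y => ‖V y‖) x u| = ‖fderiv ℝ V x u‖)
      ↔ ∀ u, ∃ t : ℝ, fderiv ℝ V x u = t • V x := forall_congr' fun u => by
        rw [hV.fderiv_norm_apply hx, abs_div, abs_norm, div_eq_iff hVx.ne', mul_comm,
          abs_real_inner_eq_norm_mul_norm_iff hx]
    _ ↔ _ := (fderiv ℝ V x).toLinearMap.forall_exists_eq_smul_iff hx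
end

section
/- Flat version of the paper's Proposition (reverse direction): Let E be a complex normed vector space, and let V₀ : EuclideanSpace ℝ (Fin n) → E be differentiable with V₀ x ≠ 0 for all x. Suppose there is a closed ℂ-valued 1-form ω on ℝⁿ such that (fderiv ℝ V₀ x) u = (ω x u) • (V₀ x) for all x and u. Then there exists a parallel rescaling of V₀: a function f : EuclideanSpace ℝ (Fin n) → ℂ with f x ≠ 0 for all x such that the map V := fun x => f x • V₀ x satisfies HasFDerivAt V (0 : EuclideanSpace ℝ (Fin n) →L[ℝ] E) x for every x (i.e. V is parallel/constant). -/
/-! By the Poincaré lemma on the convex set `ℝⁿ`, the closed form `ω` is `dg` for some `g`;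
then `d(exp(-g) • V₀) = exp(-g) • (dV₀ - dg • V₀) = 0`. -/

theorem hasFDerivAt_cexp_neg_smul_eq_zero {F E : Type*} [NormedAddCommGroup F] [NormedSpace ℝ F]
    [NormedAddCommGroup E] [NormedSpace ℝ E] [NormedSpace ℂ E] [IsScalarTower ℝ ℂ E]
    {g : F → ℂ} {V : F → E} {ω : F →L[ℝ] ℂ} {D : F →L[ℝ] E} {x : F}
    (hg : HasFDerivAt g ω x) (hV : HasFDerivAt V D x) (hD : ∀ u, D u = ω u • V x) :
    HasFDerivAt (fun y => Complex.exp (-g y) • V y) (0 : F →L[ℝ] E) x := by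
  refine (hg.neg.cexp.smul hV).congr_fderiv ?_
  ext u
  simp [hD, smul_smul]

theorem exists_parallel_rescaling_general {E : Type*} [NormedAddCommGroup E] [NormedSpace ℝ E]
    [NormedSpace ℂ E] [IsScalarTower ℝ ℂ E] {n : ℕ}
    (V₀ : EuclideanSpace ℝ (Fin n) → E)
    (hV₀ : Differentiable ℝ V₀)
    (ω : EuclideanSpace ℝ (Fin n) → (EuclideanSpace ℝ (Fin n) →L[ℝ] ℂ))
    (hω : ContDiff ℝ 1 ω)
    (hsym : ∀ (x u v : EuclideanSpace ℝ (Fin n)),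
      (fderiv ℝ ω x u) v = (fderiv ℝ ω x v) u)
    (hrel : ∀ (x u : EuclideanSpace ℝ (Fin n)),
      (fderiv ℝ V₀ x) u = (ω x u) • (V₀ x)) :
    ∃ f : EuclideanSpace ℝ (Fin n) → ℂ,
      (∀ x, f x ≠ 0) ∧
      ∀ x : EuclideanSpace ℝ (Fin n),
        HasFDerivAt (fun y => f y • V₀ y) (0 : EuclideanSpace ℝ (Fin n) →L[ℝ] E) x := by
  obtain ⟨g, hg⟩ := convex_univ.exists_forall_hasFDerivAt_of_fderiv_symmetric isOpen_univ
    (hω.differentiable one_ne_zero).differentiableOn fun x _ => hsym x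
  exact ⟨fun y => Complex.exp (-g y), fun _ => Complex.exp_ne_zero _, fun x =>
    hasFDerivAt_cexp_neg_smul_eq_zero (hg x trivial) (hV₀ x).hasFDerivAt (hrel x)⟩

/-- Flat version (reverse direction): if `V₀` is nonvanishing, differentiable, and satisfies
`∇V₀ = ω V₀` for a closed ℂ-valued 1-form `ω`, then `V₀` can be rescaled by a nonvanishing
complex function `f` so that `V = f • V₀` is parallel (has vanishing Fréchet derivative). -/
theorem exists_parallel_rescaling {E : Type*} [NormedAddCommGroup E] [NormedSpace ℝ E]
    [NormedSpace ℂ E] [IsScalarTower ℝ ℂ E] {n : ℕ}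
    (V₀ : EuclideanSpace ℝ (Fin n) → E)
    (hV₀ : Differentiable ℝ V₀) (hne : ∀ x, V₀ x ≠ 0)
    (ω : EuclideanSpace ℝ (Fin n) → (EuclideanSpace ℝ (Fin n) →L[ℝ] ℂ))
    (hω : ContDiff ℝ 1 ω)
    (hsym : ∀ (x u v : EuclideanSpace ℝ (Fin n)),
      (fderiv ℝ ω x u) v = (fderiv ℝ ω x v) u)
    (hrel : ∀ (x u : EuclideanSpace ℝ (Fin n)),
      (fderiv ℝ V₀ x) u = (ω x u) • (V₀ x)) :
    ∃ f : EuclideanSpace ℝ (Fin n) → ℂ,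
      (∀ x, f x ≠ 0) ∧
      ∀ x : EuclideanSpace ℝ (Fin n),
        HasFDerivAt (fun y => f y • V₀ y) (0 : EuclideanSpace ℝ (Fin n) →L[ℝ] E) x :=
  exists_parallel_rescaling_general V₀ hV₀ ω hω hsym hrel
end

section
/- Flat version of the paper's Proposition (forward direction): Let E be a complex normed vector space, f : EuclideanSpace ℝ (Fin n) → ℂ differentiable with f x ≠ 0 for all x, and V₀ : EuclideanSpace ℝ (Fin n) → E differentiable. Suppose the map V := fun x => f x • V₀ x is parallel, i.e. HasFDerivAt V (0 : EuclideanSpace ℝ (Fin n) →L[ℝ] E) x for every x. Then there exists a differentiable g : EuclideanSpace ℝ (Fin n) → ℂ with Complex.exp (g x) = f x for all x, and V₀ satisfies (fderiv ℝ V₀ x) u = (-(fderiv ℝ g x) u) • (V₀ x) for all x and u; in particular ∇V₀ = ωV₀ where the ℂ-valued 1-form ω = −dg = −df/f is exact. -/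
/-!
Since `exp : ℂ → ℂ∖{0}` is a covering map and `ℝⁿ` is simply connected, the nonvanishing `f`
lifts to a continuous logarithm `g`; near each point `g` differs from a branch of `log ∘ f` by a
constant, so it is differentiable. Writing `f = exp g`, the Leibniz rule for the parallel
section `exp g • V₀` gives `exp g • (dV₀ + dg • V₀) = 0`, and `exp g` never vanishes.
-/

open Topology Filter

theorem Complex.exists_continuous_exp_eq {X : Type*} [TopologicalSpace X]
    [SimplyConnectedSpace X] [LocallyPathConnectedSpace X] {f : X → ℂ} (hf : Continuous f)
    (hf₀ : ∀ x, f x ≠ 0) : ∃ g : X → ℂ, Continuous g ∧ ∀ x, Complex.exp (g x) = f x := by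
  obtain ⟨x₀⟩ := (inferInstance : Nonempty X)
  obtain ⟨g, ⟨-, hg⟩, -⟩ := Complex.isCoveringMapOn_exp.existsUnique_continuousMap_lifts
    ⟨f, hf⟩ (Complex.exp_log (hf₀ x₀)) hf₀
  exact ⟨g, g.continuous, congrFun hg⟩

theorem differentiableAt_of_continuousAt_of_differentiableAt_cexp {F : Type*}
    [NormedAddCommGroup F] [NormedSpace ℝ F] {g : F → ℂ} {x : F} (hg : ContinuousAt g x)
    (h : DifferentiableAt ℝ (fun y => Complex.exp (g y)) x) : DifferentiableAt ℝ g x := by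
  have hsmall : ∀ᶠ y in 𝓝 x, ‖g y - g x‖ < Real.pi := by
    have : Tendsto (fun y => g y - g x) (𝓝 x) (𝓝 0) := by
      simpa using hg.sub_const (g x)
    simpa using this.eventually (Metric.ball_mem_nhds 0 Real.pi_pos)
  have hlog : ∀ᶠ y in 𝓝 x, g y = g x + Complex.log (Complex.exp (g y) / Complex.exp (g x)) := by
    filter_upwards [hsmall] with y hy
    have him := (Complex.abs_im_le_norm (g y - g x)).trans_lt hy
    rw [← Complex.exp_sub, Complex.log_exp (by linarith [neg_abs_le (g y - g x).im])
      (by linarith [le_abs_self (g y - g x).im]), add_sub_cancel]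
  refine DifferentiableAt.congr_of_eventuallyEq ?_ hlog
  have hone : Complex.exp (g x) / Complex.exp (g x) ∈ Complex.slitPlane := by
    rw [div_self (Complex.exp_ne_zero _)]
    exact Complex.one_mem_slitPlane
  have hquot : DifferentiableAt ℝ (fun y => Complex.exp (g y) / Complex.exp (g x)) x := by
    simpa only [div_eq_mul_inv] using h.mul_const (Complex.exp (g x))⁻¹
  exact (((Complex.differentiableAt_log hone).restrictScalars ℝ).comp x hquot).const_add _

theorem fderiv_apply_eq_neg_smul_of_hasFDerivAt_cexp_smul_zero {F E : Type*}
    [NormedAddCommGroup F] [NormedSpace ℝ F] [NormedAddCommGroup E] [NormedSpace ℝ E]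
    [NormedSpace ℂ E] [IsScalarTower ℝ ℂ E] {g : F → ℂ} {V : F → E} {x : F}
    (hg : DifferentiableAt ℝ g x) (hV : DifferentiableAt ℝ V x)
    (hpar : HasFDerivAt (fun y => Complex.exp (g y) • V y) (0 : F →L[ℝ] E) x) (u : F) :
    fderiv ℝ V x u = -(fderiv ℝ g x u) • V x := by
  have hprod := congrArg (· u) <| (hg.hasFDerivAt.cexp.smul hV.hasFDerivAt).unique hpar
  simp only [add_apply, smul_apply, ContinuousLinearMap.smulRight_apply, zero_apply,
    smul_assoc, ← smul_add] at hprod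
  rw [neg_smul, ← add_eq_zero_iff_eq_neg]
  exact (smul_eq_zero.mp hprod).resolve_left (Complex.exp_ne_zero _)

/-- Flat version (forward direction): if `f` is nonvanishing and differentiable, `V₀` is
differentiable, and `V = f • V₀` is parallel, then `f = exp g` for a differentiable `g` and
`∇V₀ = ω V₀` with the exact 1-form `ω = -dg = -df/f`. -/
theorem parallel_gives_exact_one_form {E : Type*} [NormedAddCommGroup E] [NormedSpace ℝ E]
    [NormedSpace ℂ E] [IsScalarTower ℝ ℂ E] {n : ℕ}
    (f : EuclideanSpace ℝ (Fin n) → ℂ)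
    (hf : Differentiable ℝ f) (hfne : ∀ x, f x ≠ 0)
    (V₀ : EuclideanSpace ℝ (Fin n) → E)
    (hV₀ : Differentiable ℝ V₀)
    (hpar : ∀ x : EuclideanSpace ℝ (Fin n),
      HasFDerivAt (fun y => f y • V₀ y) (0 : EuclideanSpace ℝ (Fin n) →L[ℝ] E) x) :
    ∃ g : EuclideanSpace ℝ (Fin n) → ℂ,
      Differentiable ℝ g ∧
      (∀ x, Complex.exp (g x) = f x) ∧
      ∀ (x u : EuclideanSpace ℝ (Fin n)),
        (fderiv ℝ V₀ x) u = (-(fderiv ℝ g x u)) • (V₀ x) := by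
  obtain ⟨g, hgc, hexp⟩ := Complex.exists_continuous_exp_eq hf.continuous hfne
  obtain rfl : f = fun y => Complex.exp (g y) := funext fun y => (hexp y).symm
  have hgd : Differentiable ℝ g := fun x =>
    differentiableAt_of_continuousAt_of_differentiableAt_cexp hgc.continuousAt (hf x)
  exact ⟨g, hgd, hexp, fun x =>
    fderiv_apply_eq_neg_smul_of_hasFDerivAt_cexp_smul_zero (hgd x) (hV₀ x) (hpar x)⟩
end

section
/- The almost complex structure defined by a parallel spinor squares to minus the identity (algebraic core of the paper's Corollary producing a Kähler structure): Let V be a real inner product space, M a complex vector space, c a Clifford action of V on M, ψ ∈ M with ψ ≠ 0, and J : V → V a map such that c(X)(ψ) = Complex.I • c(J X)(ψ) for all X ∈ V. Then J(J X) = -X for every X ∈ V. -/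
/-- The almost complex structure defined by a parallel spinor squares to minus the identity:
if `c X ψ = i • c (J X) ψ` for all `X`, with `ψ ≠ 0`, then `J (J X) = -X`. -/
theorem spinor_complex_structure_sq_neg_one
    {V : Type*} [NormedAddCommGroup V] [InnerProductSpace ℝ V]
    {M : Type*} [AddCommGroup M] [Module ℂ M]
    (c : V →ₗ[ℝ] (M →ₗ[ℂ] M))
    (hc : ∀ (X : V) (m : M), c X (c X m) = ((-‖X‖ ^ 2 : ℝ) : ℂ) • m)
    (ψ : M) (hψ : ψ ≠ 0) (J : V → V)
    (hJ : ∀ X : V, c X ψ = Complex.I • c (J X) ψ) :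
    ∀ X : V, J (J X) = -X := by
  have key : ∀ Y : V, c Y ψ = 0 → Y = 0 := by
    intro Y hY
    have h := hc Y ψ
    rw [hY, map_zero] at h
    have hz : ((-‖Y‖ ^ 2 : ℝ) : ℂ) = 0 :=
      ((smul_eq_zero.mp h.symm).resolve_right hψ)
    have : ‖Y‖ = 0 := by
      have := Complex.ofReal_eq_zero.mp hz
      nlinarith [norm_nonneg Y]
    exact norm_eq_zero.mp this
  intro X
  have h1 : c X ψ = -c (J (J X)) ψ := by
    rw [hJ X, hJ (J X), smul_smul, Complex.I_mul_I, neg_one_smul]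
  have h2 : c (X + J (J X)) ψ = 0 := by
    rw [map_add, LinearMap.add_apply, h1, neg_add_cancel]
  exact eq_neg_of_add_eq_zero_right (key _ h2)
end

section
/- The paper's displayed anticommutator identity for the operator J defined by a spinor: Let V be a real inner product space, M a complex vector space, c a Clifford action of V on M, ψ ∈ M with ψ ≠ 0, and J : V → V with c(X)(ψ) = Complex.I • c(J X)(ψ) for all X. Then for all X, Y ∈ V: c(J X)(c(J Y)(ψ)) + c(J Y)(c(J X)(ψ)) = c(X)(c(Y)(ψ)) + c(Y)(c(X)(ψ)) + (2 * Complex.I * (⟪J X, Y⟫ + ⟪J Y, X⟫ : ℝ)) • ψ. -/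
open scoped RealInnerProductSpace

/-- The paper's displayed anticommutator identity for the operator `J` defined by a spinor:
`c(JX)c(JY)ψ + c(JY)c(JX)ψ = c(X)c(Y)ψ + c(Y)c(X)ψ + 2i(⟪JX,Y⟫+⟪JY,X⟫)ψ`. -/
theorem spinor_J_anticommutator_identity
    {V : Type*} [NormedAddCommGroup V] [InnerProductSpace ℝ V]
    {M : Type*} [AddCommGroup M] [Module ℂ M]
    (c : V →ₗ[ℝ] (M →ₗ[ℂ] M))
    (hc : ∀ (X : V) (m : M), c X (c X m) = ((-‖X‖ ^ 2 : ℝ) : ℂ) • m)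
    (ψ : M) (hψ : ψ ≠ 0) (J : V → V)
    (hJ : ∀ X : V, c X ψ = Complex.I • c (J X) ψ) :
    ∀ X Y : V,
      c (J X) (c (J Y) ψ) + c (J Y) (c (J X) ψ) =
        c X (c Y ψ) + c Y (c X ψ) +
          (2 * Complex.I * ((⟪J X, Y⟫ + ⟪J Y, X⟫ : ℝ) : ℂ)) • ψ := by
  -- anticommutator lemma
  have anti : ∀ (X Y : V) (m : M),
      c X (c Y m) + c Y (c X m) = ((-2 * ⟪X, Y⟫ : ℝ) : ℂ) • m := by
    intro X Y m
    have h := hc (X + Y) m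
    rw [map_add] at h
    simp only [LinearMap.add_apply, map_add] at h
    rw [hc X m, hc Y m] at h
    have hn : ‖X + Y‖ ^ 2 = ‖X‖ ^ 2 + 2 * ⟪X, Y⟫ + ‖Y‖ ^ 2 := norm_add_sq_real X Y
    rw [hn] at h
    have : c X (c Y m) + c Y (c X m)
        = ((-(‖X‖ ^ 2 + 2 * ⟪X, Y⟫ + ‖Y‖ ^ 2) : ℝ) : ℂ) • m
          - ((-‖X‖ ^ 2 : ℝ) : ℂ) • m - ((-‖Y‖ ^ 2 : ℝ) : ℂ) • m := by
      rw [← h]; abel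
    rw [this, ← sub_smul, ← sub_smul]
    congr 1
    push_cast
    ring
  -- c(JX)ψ = -I • c X ψ
  have hJ' : ∀ X : V, c (J X) ψ = (-Complex.I) • c X ψ := by
    intro X
    rw [hJ X, smul_smul]
    simp [Complex.I_mul_I]
  intro X Y
  have e1 : c (J X) (c (J Y) ψ) = c Y (c X ψ)
      + (2 * Complex.I * (⟪J X, Y⟫ : ℝ)) • ψ := by
    have h1 : c (J X) (c (J Y) ψ) = (-Complex.I) • c (J X) (c Y ψ) := by
      rw [hJ' Y, map_smul]
    have h2 : c (J X) (c Y ψ) =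
        ((-2 * ⟪J X, Y⟫ : ℝ) : ℂ) • ψ - c Y (c (J X) ψ) := by
      rw [← anti (J X) Y ψ]; abel
    rw [h1, h2, hJ' X, map_smul, smul_sub, smul_smul, smul_smul]
    push_cast
    ring_nf
    rw [Complex.I_sq]
    module
  have e2 : c (J Y) (c (J X) ψ) = c X (c Y ψ)
      + (2 * Complex.I * (⟪J Y, X⟫ : ℝ)) • ψ := by
    have h1 : c (J Y) (c (J X) ψ) = (-Complex.I) • c (J Y) (c X ψ) := by
      rw [hJ' X, map_smul]
    have h2 : c (J Y) (c X ψ) =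
        ((-2 * ⟪J Y, X⟫ : ℝ) : ℂ) • ψ - c X (c (J Y) ψ) := by
      rw [← anti (J Y) X ψ]; abel
    rw [h1, h2, hJ' Y, map_smul, smul_sub, smul_smul, smul_smul]
    push_cast
    ring_nf
    rw [Complex.I_sq]
    module
  rw [e1, e2]
  push_cast
  module
end

section
/- Compatibility of the spinor-induced complex structure with the metric (from the paper's Corollary): Let V be a real inner product space, M a complex vector space, c a Clifford action of V on M, ψ ∈ M with ψ ≠ 0, and J : V → V with c(X)(ψ) = Complex.I • c(J X)(ψ) for all X. Then for all X, Y ∈ V, ⟪J X, J Y⟫ = ⟪X, Y⟫ and ⟪J X, Y⟫ = -⟪J Y, X⟫; that is, J is orthogonal and skew-adjoint with respect to the inner product. -/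
open scoped RealInnerProductSpace

/-- Polarized Clifford relation. -/
lemma clifford_anticomm
    {V : Type*} [NormedAddCommGroup V] [InnerProductSpace ℝ V]
    {M : Type*} [AddCommGroup M] [Module ℂ M]
    (c : V →ₗ[ℝ] (M →ₗ[ℂ] M))
    (hc : ∀ (X : V) (m : M), c X (c X m) = ((-‖X‖ ^ 2 : ℝ) : ℂ) • m)
    (X Y : V) (m : M) :
    c X (c Y m) + c Y (c X m) = ((-(2 * ⟪X, Y⟫) : ℝ) : ℂ) • m := by
  have h := hc (X + Y) m
  rw [map_add] at h
  simp only [LinearMap.add_apply, map_add] at h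
  rw [hc X m, hc Y m] at h
  have h2 : c X (c Y m) + c Y (c X m)
      = ((-‖X + Y‖ ^ 2 : ℝ) : ℂ) • m - ((-‖X‖ ^ 2 : ℝ) : ℂ) • m
        - ((-‖Y‖ ^ 2 : ℝ) : ℂ) • m := by
    rw [← h]; abel
  rw [h2, norm_add_sq_real]
  match_scalars
  ring

/-- Compatibility of the spinor-induced complex structure with the metric: `J` is orthogonal
and skew-adjoint, `⟪JX, JY⟫ = ⟪X, Y⟫` and `⟪JX, Y⟫ = -⟪JY, X⟫`. -/
theorem spinor_J_metric_compatibility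
    {V : Type*} [NormedAddCommGroup V] [InnerProductSpace ℝ V]
    {M : Type*} [AddCommGroup M] [Module ℂ M]
    (c : V →ₗ[ℝ] (M →ₗ[ℂ] M))
    (hc : ∀ (X : V) (m : M), c X (c X m) = ((-‖X‖ ^ 2 : ℝ) : ℂ) • m)
    (ψ : M) (hψ : ψ ≠ 0) (J : V → V)
    (hJ : ∀ X : V, c X ψ = Complex.I • c (J X) ψ) :
    ∀ X Y : V, ⟪J X, J Y⟫ = ⟪X, Y⟫ ∧ ⟪J X, Y⟫ = -⟪J Y, X⟫ := by
  have key : ∀ X Y : V, c X (c Y ψ)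
      = c (J Y) (c (J X) ψ) + ((-(2 * ⟪X, J Y⟫) : ℝ) * Complex.I) • ψ := by
    intro X Y
    calc c X (c Y ψ) = c X (Complex.I • c (J Y) ψ) := by rw [← hJ Y]
      _ = Complex.I • c X (c (J Y) ψ) := (map_smul _ _ _)
      _ = Complex.I • (((-(2 * ⟪X, J Y⟫) : ℝ) : ℂ) • ψ - c (J Y) (c X ψ)) := by
          rw [eq_sub_of_add_eq (clifford_anticomm c hc X (J Y) ψ)]
      _ = Complex.I • (((-(2 * ⟪X, J Y⟫) : ℝ) : ℂ) • ψ
            - Complex.I • c (J Y) (c (J X) ψ)) := by rw [hJ X, map_smul]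
      _ = c (J Y) (c (J X) ψ) + ((-(2 * ⟪X, J Y⟫) : ℝ) * Complex.I) • ψ := by
          rw [smul_sub, smul_smul, smul_smul, Complex.I_mul_I, neg_one_smul,
            sub_neg_eq_add, mul_comm]
          abel
  intro X Y
  -- combine the two key equations with the anticommutation relations
  have h1 := clifford_anticomm c hc X Y ψ
  rw [key X Y, key Y X] at h1
  have h2 := clifford_anticomm c hc (J Y) (J X) ψ
  have h3 : (((-(2 * ⟪X, Y⟫) : ℝ) : ℂ)
      - ((-(2 * ⟪J Y, J X⟫) : ℝ) : ℂ)
      - ((-(2 * ⟪X, J Y⟫) : ℝ) * Complex.I)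
      - ((-(2 * ⟪Y, J X⟫) : ℝ) * Complex.I)) • ψ = 0 := by
    have : c (J Y) (c (J X) ψ) + c (J X) (c (J Y) ψ)
        = ((-(2 * ⟪J Y, J X⟫) : ℝ) : ℂ) • ψ := h2
    rw [sub_smul, sub_smul, sub_smul, ← h1, ← this]
    abel
  have h4 : (((-(2 * ⟪X, Y⟫) : ℝ) : ℂ)
      - ((-(2 * ⟪J Y, J X⟫) : ℝ) : ℂ)
      - ((-(2 * ⟪X, J Y⟫) : ℝ) * Complex.I)
      - ((-(2 * ⟪Y, J X⟫) : ℝ) * Complex.I)) = 0 :=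
    (smul_eq_zero.mp h3).resolve_right hψ
  rw [Complex.ext_iff] at h4
  obtain ⟨hre, him⟩ := h4
  simp [Complex.sub_re, Complex.sub_im, Complex.ofReal_re, Complex.ofReal_im,
    Complex.mul_re, Complex.mul_im, Complex.I_re, Complex.I_im] at hre him
  constructor
  · have := real_inner_comm (J Y) (J X)
    linarith [hre]
  · have e1 := real_inner_comm (J Y) X
    have e2 := real_inner_comm (J X) Y
    linarith [him]
end

section
/- Linearity of the spinor-induced complex structure: Let V be a real inner product space, M a complex vector space, c a Clifford action of V on M, ψ ∈ M with ψ ≠ 0, and J : V → V with c(X)(ψ) = Complex.I • c(J X)(ψ) for all X. Then J is ℝ-linear: J(X + Y) = J X + J Y and J(r • X) = r • J X for all X, Y ∈ V and r ∈ ℝ. -/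
/-- Linearity of the spinor-induced complex structure: the map `J` defined by
`c X ψ = i • c (J X) ψ` (for a nonzero spinor `ψ`) is ℝ-linear. -/
theorem spinor_J_linear
    {V : Type*} [NormedAddCommGroup V] [InnerProductSpace ℝ V]
    {M : Type*} [AddCommGroup M] [Module ℂ M]
    (c : V →ₗ[ℝ] (M →ₗ[ℂ] M))
    (hc : ∀ (X : V) (m : M), c X (c X m) = ((-‖X‖ ^ 2 : ℝ) : ℂ) • m)
    (ψ : M) (hψ : ψ ≠ 0) (J : V → V)
    (hJ : ∀ X : V, c X ψ = Complex.I • c (J X) ψ) :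
    (∀ X Y : V, J (X + Y) = J X + J Y) ∧ (∀ (r : ℝ) (X : V), J (r • X) = r • J X) := by
  -- injectivity of X ↦ c X ψ
  have hinj : ∀ X Y : V, c X ψ = c Y ψ → X = Y := by
    intro X Y h
    have h0 : c (X - Y) ψ = 0 := by
      rw [map_sub, LinearMap.sub_apply, h, sub_self]
    have h1 : ((-‖X - Y‖ ^ 2 : ℝ) : ℂ) • ψ = 0 := by
      rw [← hc (X - Y) ψ, h0, map_zero]
    rcases smul_eq_zero.mp h1 with h2 | h2
    · have : ‖X - Y‖ = 0 := by
        have := Complex.ofReal_eq_zero.mp h2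
        nlinarith [norm_nonneg (X - Y)]
      exact sub_eq_zero.mp (norm_eq_zero.mp this)
    · exact absurd h2 hψ
  -- c (J X) ψ determines J X from c X ψ: c (J X) ψ = -I • c X ψ
  have hJ' : ∀ X : V, c (J X) ψ = (-Complex.I) • c X ψ := by
    intro X
    rw [hJ X, smul_smul, neg_mul, Complex.I_mul_I, neg_neg, one_smul]
  constructor
  · intro X Y
    apply hinj
    rw [hJ' (X + Y), map_add, LinearMap.add_apply, map_add, LinearMap.add_apply,
      hJ' X, hJ' Y, smul_add]
  · intro r X
    apply hinj
    rw [hJ' (r • X), map_smul, LinearMap.smul_apply, map_smul, LinearMap.smul_apply,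
      hJ' X, smul_comm]
end
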